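/- Let G be the graph obtained from the complete graph on (k+2 choose 2) vertices by attaching k new pendant leaves to each vertex of the complete graph. Then the sigma chromatic number of G is at most 3. -/

import Mathlib

open Finset
open scoped Classical

/-- A sigma coloring: positive labels, adjacent vertices have different neighborhood sums. -/
def IsSigmaColoring {V : Type*} [Fintype V] (G : SimpleGraph V) (c : V → ℕ) : Prop :=
  (∀ v, 0 < c v) ∧
  ∀ u v, G.Adj u v →
    ∑ w ∈ G.neighborFinset u, c w ≠ ∑ w ∈ G.neighborFinset v, c w

/-- The sigma chromatic number: minimum number of distinct labels in a sigma coloring. -/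
noncomputable def sigmaChrom {V : Type*} [Fintype V] (G : SimpleGraph V) : ℕ :=
  sInf {k | ∃ c : V → ℕ, IsSigmaColoring G c ∧ (Finset.univ.image c).card = k}

/-- The complete graph on `Fin N` with `k` pendant leaves attached to each vertex:
`inl a` are the clique vertices, `inr (a, j)` is the `j`-th leaf attached to `a`. -/
def leafy (k N : ℕ) : SimpleGraph (Fin N ⊕ Fin N × Fin k) :=
  SimpleGraph.fromRel (fun x y =>
    match x, y with
    | Sum.inl _, Sum.inl _ => True
    | Sum.inl a, Sum.inr (b, _) => a = b
    | _, _ => False)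

/-!
Give every clique vertex the label `1` and every leaf a label `b ^ i` with `i < 3` and `b = k + 1`.
The neighbourhood sum of a leaf is then `1`, while that of the clique vertex `a` is `N - 1` plus
the sum of the leaf labels at `a`; so the labelling is a sigma colouring as soon as these leaf
sums are pairwise distinct. Since `b` exceeds the number `k` of leaves, the leaf sum at `a` is a
base-`b` numeral whose digits count how often each label occurs, so it determines the multiset of
labels at `a`. By stars and bars there are exactly `(k + 2).choose 2` multisets of `k` labels
drawn from three, one for each clique vertex.
-/

theorem Fin.eq_of_sum_mul_pow_eq {b : ℕ} :
    ∀ {m : ℕ} {d e : Fin m → ℕ}, (∀ i, d i < b) → (∀ i, e i < b) →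
      ∑ i, d i * b ^ (i : ℕ) = ∑ i, e i * b ^ (i : ℕ) → d = e
  | 0, _, _, _, _, _ => funext finZeroElim
  | m + 1, d, e, hd, he, h => by
    have hsplit (f : Fin (m + 1) → ℕ) :
        ∑ i, f i * b ^ (i : ℕ) = f 0 + b * ∑ i : Fin m, f i.succ * b ^ (i : ℕ) := by
      simp only [Fin.sum_univ_succ, Fin.val_zero, pow_zero, mul_one, Fin.val_succ, pow_succ,
        Finset.mul_sum]
      congr 1
      exact Finset.sum_congr rfl fun i _ => by ring
    rw [hsplit, hsplit] at h
    have h0 : d 0 = e 0 := by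
      simpa [Nat.add_mul_mod_self_left, Nat.mod_eq_of_lt (hd 0), Nat.mod_eq_of_lt (he 0)]
        using congrArg (· % b) h
    rw [h0, add_right_inj] at h
    have htail := Fin.eq_of_sum_mul_pow_eq (fun i => hd i.succ) (fun i => he i.succ)
      (Nat.eq_of_mul_eq_mul_left (Nat.zero_lt_of_lt (he 0)) h)
    exact funext (Fin.cases h0 (congrFun htail))

theorem Multiset.eq_of_sum_map_pow_eq {m b : ℕ} {s t : Multiset (Fin m)}
    (hs : card s < b) (ht : card t < b)
    (h : (s.map fun i : Fin m => b ^ (i : ℕ)).sum = (t.map fun i : Fin m => b ^ (i : ℕ)).sum) :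
    s = t := by
  have hsum (u : Multiset (Fin m)) :
      (u.map fun i : Fin m => b ^ (i : ℕ)).sum = ∑ i, u.count i * b ^ (i : ℕ) := by
    rw [Finset.sum_multiset_map_count]
    exact Finset.sum_subset (subset_univ _) fun i _ hi => by
      rw [Multiset.count_eq_zero.2 (by simpa using hi), zero_smul]
  rw [hsum, hsum] at h
  have hcount (u : Multiset (Fin m)) (hu : card u < b) (i : Fin m) : u.count i < b :=
    (Multiset.count_le_card i u).trans_lt hu
  exact Multiset.ext.2 (congrFun (Fin.eq_of_sum_mul_pow_eq (hcount s hs) (hcount t ht) h))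

theorem Sym.exists_univ_map_eq {α : Type*} {k : ℕ} (s : Sym α k) :
    ∃ t : Fin k → α, univ.val.map t = s := by
  obtain ⟨s, rfl⟩ := s
  obtain ⟨l, rfl⟩ := Quot.exists_rep s
  exact ⟨fun i => l[i], (Fin.univ_val_map _).trans (congrArg _ List.ofFn_getElem)⟩

theorem Sym.exists_injective_sum_pow {m k b : ℕ} (hkb : k < b) :
    ∃ t : Sym (Fin m) k → Fin k → Fin m, Function.Injective fun s => ∑ j, b ^ (t s j : ℕ) := by
  choose t ht using fun s : Sym (Fin m) k => s.exists_univ_map_eq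
  refine ⟨t, fun s s' h => Sym.coe_injective (Multiset.eq_of_sum_map_pow_eq
    (by simpa using hkb) (by simpa using hkb) ?_)⟩
  simpa only [← ht, Multiset.map_map, Function.comp_def, Finset.sum_eq_multiset_sum] using h

theorem sigmaChrom_le_card_image {V : Type*} [Fintype V] {G : SimpleGraph V} {c : V → ℕ}
    (hc : IsSigmaColoring G c) : sigmaChrom G ≤ (univ.image c).card :=
  Nat.sInf_le ⟨c, hc, rfl⟩

section Leafy

variable {k N : ℕ}

@[simp]
theorem leafy_adj_inl_inl {a b : Fin N} : (leafy k N).Adj (.inl a) (.inl b) ↔ a ≠ b := by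
  simp [leafy]

@[simp]
theorem leafy_adj_inl_inr {a b : Fin N} {j : Fin k} :
    (leafy k N).Adj (.inl a) (.inr (b, j)) ↔ a = b := by
  simp [leafy]

@[simp]
theorem leafy_adj_inr_inl {a b : Fin N} {j : Fin k} :
    (leafy k N).Adj (.inr (a, j)) (.inl b) ↔ a = b := by
  simp [leafy, eq_comm]

@[simp]
theorem leafy_adj_inr_inr {a b : Fin N} {i j : Fin k} :
    ¬ (leafy k N).Adj (.inr (a, i)) (.inr (b, j)) := by
  simp [leafy]

theorem sum_neighborFinset_leafy_inl (c : Fin N ⊕ Fin N × Fin k → ℕ) (a : Fin N) :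
    ∑ w ∈ (leafy k N).neighborFinset (.inl a), c w =
      ∑ b ∈ univ.erase a, c (.inl b) + ∑ j, c (.inr (a, j)) := by
  rw [SimpleGraph.neighborFinset_eq_filter, Finset.sum_filter, Fintype.sum_sum_type,
    Fintype.sum_prod_type]
  simp [Finset.sum_ite, Finset.filter_ne]

theorem neighborFinset_leafy_inr (a : Fin N) (j : Fin k) :
    (leafy k N).neighborFinset (.inr (a, j)) = {.inl a} := by
  ext (b | ⟨b, i⟩) <;> simp [eq_comm]

theorem isSigmaColoring_leafy (hkN : k < N) (ℓ : Fin N → Fin k → ℕ) (hpos : ∀ a j, 0 < ℓ a j)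
    (hinj : Function.Injective fun a => ∑ j, ℓ a j) :
    IsSigmaColoring (leafy k N) (Sum.elim 1 fun p => ℓ p.1 p.2) := by
  have hinl (a : Fin N) : ∑ w ∈ (leafy k N).neighborFinset (.inl a),
      Sum.elim 1 (fun p => ℓ p.1 p.2) w = N - 1 + ∑ j, ℓ a j := by
    simp [sum_neighborFinset_leafy_inl]
  have hinr (a : Fin N) (j : Fin k) : ∑ w ∈ (leafy k N).neighborFinset (.inr (a, j)),
      Sum.elim 1 (fun p => ℓ p.1 p.2) w = 1 := by
    simp [neighborFinset_leafy_inr]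
  have hleaf (a : Fin N) (j : Fin k) : N - 1 + ∑ i, ℓ a i ≠ 1 := by
    have := (hpos a j).trans_le (Finset.single_le_sum (fun i _ => (hpos a i).le) (mem_univ j))
    have := j.isLt
    omega
  refine ⟨by rintro (a | ⟨a, j⟩) <;> simp [hpos], ?_⟩
  rintro (a | ⟨a, i⟩) (b | ⟨b, j⟩) hadj
  · rw [hinl, hinl, Ne, add_right_inj]
    exact fun h => leafy_adj_inl_inl.1 hadj (hinj h)
  · rw [hinl, hinr]
    exact hleaf a j
  · rw [hinl, hinr]
    exact (hleaf b i).symm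
  · exact absurd hadj leafy_adj_inr_inr

end Leafy

/-- the complete graph on `(k+2).choose 2` vertices with `k` pendant leaves
attached to each vertex has sigma chromatic number at most `3`. -/
theorem leafy_sigmaChrom_le_three (k : ℕ) :
    sigmaChrom (leafy k ((k + 2).choose 2)) ≤ 3 := by
  obtain ⟨t, ht⟩ := Sym.exists_injective_sum_pow (m := 3) (Nat.lt_succ_self k)
  have hcard : Fintype.card (Sym (Fin 3) k) = (k + 2).choose 2 := by
    rw [Sym.card_sym_eq_choose, Fintype.card_fin, show 3 + k - 1 = k + 2 by omega,
      Nat.choose_symm_add]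
  let e := (Fintype.equivFinOfCardEq hcard).symm
  have hk : k < (k + 2).choose 2 := by
    rw [Nat.choose_succ_succ, Nat.choose_one_right]
    omega
  have hsigma := isSigmaColoring_leafy hk (fun a j => (k + 1) ^ (t (e a) j : ℕ))
    (fun _ _ => by positivity) (ht.comp e.injective)
  refine (sigmaChrom_le_card_image hsigma).trans ?_
  calc _ ≤ (univ.image fun i : Fin 3 => (k + 1) ^ (i : ℕ)).card := by
        refine card_le_card fun x hx => ?_
        obtain ⟨a | ⟨a, j⟩, -, rfl⟩ := mem_image.1 hx
        exacts [mem_image.2 ⟨0, mem_univ _, pow_zero _⟩, mem_image_of_mem _ (mem_univ _)]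
    _ ≤ 3 := card_image_le.trans_eq (card_fin 3)
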